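/- arXiv:1902.09646 — 2 statements merged into one kernel-verified Lean document; each statement's English description precedes it below -/
import Mathlib

section
/- Let p ∈ ℝ and let r̂ : ℝ → [0,p] be Lipschitz continuous with Lipschitz constant at most 1/τ, where τ = σ_θ²/(σ_ε² + σ_θ²). Then the expected payoff of adoption v_i ↦ v_i − p + E[r̂ ∥ v_i] is a nondecreasing function of v_i on ℝ. -/
noncomputable section

open MeasureTheory Real Set Filter

/-- standard normal pdf φ -/
def stdPdf (x : ℝ) : ℝ := (Real.sqrt (2 * Real.pi))⁻¹ * Real.exp (-(x ^ 2) / 2)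

/-- standard normal cdf Φ -/
def stdCdf (x : ℝ) : ℝ := ∫ t in Set.Iic x, stdPdf t

/-- posterior expected reward  E[r ‖ x] = ∫ r(v) φ((v-μ_x)/σ_v)/σ_v dv, where
    μ_x = τ x + (1-τ) θ, τ = σθ²/(σε²+σθ²), σ_v = σε σθ / √(σε²+σθ²). -/
def postReward (θ σε σθ : ℝ) (r : ℝ → ℝ) (x : ℝ) : ℝ :=
  ∫ v, r v * stdPdf ((v - (σθ ^ 2 / (σε ^ 2 + σθ ^ 2) * x +
      (1 - σθ ^ 2 / (σε ^ 2 + σθ ^ 2)) * θ)) / (σε * σθ / Real.sqrt (σε ^ 2 + σθ ^ 2))) /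
    (σε * σθ / Real.sqrt (σε ^ 2 + σθ ^ 2))

/-- expected profit  Π(p, r, c) = ∫ (p - r(v)) Φ((v-c)/σε) φ((θ-v)/σθ)/σθ dv. -/
def profit (θ σε σθ : ℝ) (p : ℝ) (r : ℝ → ℝ) (c : ℝ) : ℝ :=
  ∫ v, (p - r v) * stdCdf ((v - c) / σε) * stdPdf ((θ - v) / σθ) / σθ

lemma stdPdf_nonneg (x : ℝ) : 0 ≤ stdPdf x := by
  unfold stdPdf; positivity

lemma stdPdf_eq : stdPdf = fun x => (Real.sqrt (2 * Real.pi))⁻¹ * Real.exp (-(1/2) * x ^ 2) := by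
  funext x; unfold stdPdf; congr 1; ring

lemma integrable_stdPdf : Integrable stdPdf := by
  rw [stdPdf_eq]
  exact (integrable_exp_neg_mul_sq (by norm_num)).const_mul _

lemma integral_stdPdf : ∫ x, stdPdf x = 1 := by
  rw [stdPdf_eq]
  rw [integral_const_mul, integral_gaussian]
  rw [show Real.pi / (1/2) = 2 * Real.pi by ring]
  rw [inv_mul_cancel₀]
  positivity

lemma postReward_eq (θ σε σθ : ℝ) (hσε : 0 < σε) (hσθ : 0 < σθ) (r : ℝ → ℝ) (x : ℝ) :
    postReward θ σε σθ r x =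
      ∫ u, r ((σε * σθ / Real.sqrt (σε ^ 2 + σθ ^ 2)) * u +
        (σθ ^ 2 / (σε ^ 2 + σθ ^ 2) * x + (1 - σθ ^ 2 / (σε ^ 2 + σθ ^ 2)) * θ)) * stdPdf u := by
  set σv := σε * σθ / Real.sqrt (σε ^ 2 + σθ ^ 2) with hσv
  set μ := σθ ^ 2 / (σε ^ 2 + σθ ^ 2) * x + (1 - σθ ^ 2 / (σε ^ 2 + σθ ^ 2)) * θ with hμ
  have hσvpos : 0 < σv := by
    apply div_pos (by positivity)
    apply Real.sqrt_pos.mpr; positivity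
  have key : ∀ g : ℝ → ℝ, ∫ v, g v = σv * ∫ u, g (σv * u + μ) := by
    intro g
    have h1 : (∫ u, g (σv * u + μ)) = |σv⁻¹| • ∫ v, g (v + μ) :=
      MeasureTheory.Measure.integral_comp_mul_left (fun t => g (t + μ)) σv
    rw [h1, MeasureTheory.integral_add_right_eq_self,
      abs_of_pos (inv_pos.mpr hσvpos), smul_eq_mul]
    field_simp
  calc postReward θ σε σθ r x
      = σv * ∫ u, r (σv * u + μ) * stdPdf ((σv * u + μ - μ) / σv) / σv :=
        key (fun v => r v * stdPdf ((v - μ) / σv) / σv)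
    _ = ∫ u, r (σv * u + μ) * stdPdf u := by
        rw [← integral_const_mul]
        congr 1; funext u
        rw [show (σv * u + μ - μ) / σv = u by field_simp; ring]
        field_simp

/-- if the reward program is Lipschitz with constant at most 1/τ, the expected
    payoff of adoption is nondecreasing in the private valuation. -/
theorem stmt_4 (θ σε σθ : ℝ) (hσε : 0 < σε) (hσθ : 0 < σθ)
    (τ : ℝ) (hτ : τ = σθ ^ 2 / (σε ^ 2 + σθ ^ 2))
    (p : ℝ) (r : ℝ → ℝ) (hrange : ∀ v, r v ∈ Set.Icc 0 p)
    (hlip : ∀ x y : ℝ, |r x - r y| ≤ τ⁻¹ * |x - y|) :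
    Monotone (fun vi : ℝ => vi - p + postReward θ σε σθ r vi) := by
  have hsum : (0:ℝ) < σε ^ 2 + σθ ^ 2 := by positivity
  have hτpos : 0 < τ := by rw [hτ]; positivity
  have hp0 : 0 ≤ p := le_trans (hrange 0).1 (hrange 0).2
  -- r is continuous
  have hrc : Continuous r := by
    have : LipschitzWith (Real.toNNReal τ⁻¹) r := by
      apply LipschitzWith.of_dist_le_mul
      intro a b
      rw [Real.dist_eq, Real.dist_eq]
      calc |r a - r b| ≤ τ⁻¹ * |a - b| := hlip a b
        _ = (Real.toNNReal τ⁻¹ : ℝ) * |a - b| := by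
            rw [Real.coe_toNNReal _ (by positivity)]
    exact this.continuous
  set σv := σε * σθ / Real.sqrt (σε ^ 2 + σθ ^ 2) with hσv
  have hInt : ∀ c : ℝ, Integrable (fun u => r (σv * u + c) * stdPdf u) := by
    intro c
    apply integrable_stdPdf.bdd_mul (c := p)
    · exact (hrc.comp (by continuity)).aestronglyMeasurable
    · refine Filter.Eventually.of_forall (fun u => ?_)
      rw [Real.norm_eq_abs, abs_of_nonneg (hrange _).1]
      exact (hrange _).2
  intro x y hxy
  simp only
  rw [postReward_eq θ σε σθ hσε hσθ r x, postReward_eq θ σε σθ hσε hσθ r y, ← hσv, ← hτ]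
  set μx := τ * x + (1 - τ) * θ with hμx
  set μy := τ * y + (1 - τ) * θ with hμy
  have hsub : (∫ u, r (σv * u + μx) * stdPdf u) - (∫ u, r (σv * u + μy) * stdPdf u)
      = ∫ u, (r (σv * u + μx) - r (σv * u + μy)) * stdPdf u := by
    rw [← integral_sub (hInt μx) (hInt μy)]
    congr 1; funext u; ring
  have hbound : (∫ u, (r (σv * u + μx) - r (σv * u + μy)) * stdPdf u) ≤ y - x := by
    have h1 : ∀ u : ℝ, (r (σv * u + μx) - r (σv * u + μy)) * stdPdf u
        ≤ (y - x) * stdPdf u := by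
      intro u
      apply mul_le_mul_of_nonneg_right _ (stdPdf_nonneg u)
      calc r (σv * u + μx) - r (σv * u + μy) ≤ |r (σv * u + μx) - r (σv * u + μy)| :=
            le_abs_self _
        _ ≤ τ⁻¹ * |(σv * u + μx) - (σv * u + μy)| := hlip _ _
        _ = τ⁻¹ * (τ * |x - y|) := by
            congr 1
            rw [show (σv * u + μx) - (σv * u + μy) = τ * (x - y) by rw [hμx, hμy]; ring,
              abs_mul, abs_of_pos hτpos]
        _ = |x - y| := by field_simp
        _ = y - x := by rw [abs_of_nonpos (by linarith), neg_sub]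
    calc (∫ u, (r (σv * u + μx) - r (σv * u + μy)) * stdPdf u)
        ≤ ∫ u, (y - x) * stdPdf u := by
          apply integral_mono (((hInt μx).sub (hInt μy)).congr (by filter_upwards with u; simp only [Pi.sub_apply]; ring)) (integrable_stdPdf.const_mul _) h1
      _ = y - x := by rw [integral_const_mul, integral_stdPdf, mul_one]
  linarith [hsub, hbound]
end
end

section
/- Let r̂ : ℝ → ℝ be bounded, measurable and nondecreasing, and not almost everywhere equal to a constant (with respect to Lebesgue measure). Then the posterior expected reward is strictly increasing in the private valuation: for all v_1 > v_2, E[r̂ ∥ v_1] > E[r̂ ∥ v_2]. Similarly, if r̂ is nonincreasing and not almost everywhere constant, then E[r̂ ∥ v_1] < E[r̂ ∥ v_2] for all v_1 > v_2. -/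
noncomputable section

open MeasureTheory Real Set Filter

lemma stdPdf_pos (x : ℝ) : 0 < stdPdf x := by
  unfold stdPdf
  positivity

lemma stdPdf_continuous : Continuous stdPdf := by
  unfold stdPdf
  fun_prop

lemma gauss_integrable {c : ℝ} (hc : 0 < c) :
    Integrable (fun v : ℝ => stdPdf (v / c) / c) := by
  have h : (0:ℝ) < 1 / (2 * c ^ 2) := by positivity
  have := (integrable_exp_neg_mul_sq h).const_mul ((Real.sqrt (2 * Real.pi))⁻¹ / c)
  refine this.congr (Eventually.of_forall fun v => ?_)
  unfold stdPdf
  have : -(1 / (2 * c ^ 2)) * v ^ 2 = -((v / c) ^ 2) / 2 := by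
    field_simp
  simp only
  rw [this]
  ring

lemma mono_ae_periodic (r : ℝ → ℝ) (hmono : Monotone r) (d : ℝ) (hd : 0 < d)
    (h : ∀ᵐ v : ℝ ∂volume, r (v + d) = r v) : ∃ k, ∀ᵐ v : ℝ ∂volume, r v = k := by
  set A : Set ℝ := {v | r (v + d) = r v} with hA
  have hAc : volume Aᶜ = 0 := h
  have hB : ∀ᵐ v : ℝ ∂volume, ∀ n : ℕ, v + n * d ∈ A := by
    rw [ae_all_iff]
    intro n
    have key : volume ((fun v : ℝ => v + n * d) ⁻¹' Aᶜ) = 0 := by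
      rw [measure_preimage_add_right]
      exact hAc
    exact key
  have hB' : ∀ᵐ v : ℝ ∂volume, ∀ n : ℕ, r (v + n * d) = r v := by
    filter_upwards [hB] with v hv
    intro n
    induction n with
    | zero => simp
    | succ m ih =>
      have := hv m
      push_cast
      have e : v + (m + 1 : ℝ) * d = (v + m * d) + d := by ring
      rw [e, this]
      push_cast at ih
      exact ih
  set B : Set ℝ := {v | ∀ n : ℕ, r (v + n * d) = r v} with hBdef
  have hBc : volume Bᶜ = 0 := hB'
  have hBne : B.Nonempty := by
    by_contra hne
    rw [Set.not_nonempty_iff_eq_empty] at hne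
    rw [hne, Set.compl_empty] at hBc
    simp [Real.volume_univ] at hBc
  obtain ⟨v0, hv0⟩ := hBne
  have hconst : ∀ a ∈ B, ∀ b ∈ B, a ≤ b → r a = r b := by
    intro a ha b hb hab
    obtain ⟨n, hn⟩ := exists_nat_ge ((b - a) / d)
    have hle : b ≤ a + n * d := by
      have := (div_le_iff₀ hd).mp hn
      linarith
    have h1 : r a ≤ r b := hmono hab
    have h2 : r b ≤ r (a + n * d) := hmono hle
    rw [ha n] at h2
    linarith
  refine ⟨r v0, ?_⟩
  filter_upwards [hB'] with v hv
  rcases le_total v v0 with hle | hle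
  · exact hconst v hv v0 hv0 hle
  · exact (hconst v0 hv0 v hv hle).symm

lemma key_lt (σv : ℝ) (hσv : 0 < σv) (r : ℝ → ℝ) (hmeas : Measurable r)
    (hbdd : ∃ M, ∀ v, |r v| ≤ M) (hnc : ¬ ∃ k : ℝ, ∀ᵐ v : ℝ ∂(volume : Measure ℝ), r v = k)
    (hmono : Monotone r) {m2 m1 : ℝ} (hm : m2 < m1) :
    (∫ v, r v * stdPdf ((v - m2) / σv) / σv) < ∫ v, r v * stdPdf ((v - m1) / σv) / σv := by
  obtain ⟨M, hM⟩ := hbdd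
  set d := m1 - m2 with hd
  have hd0 : 0 < d := by simp only [hd]; linarith
  set g : ℝ → ℝ := fun v => stdPdf (v / σv) / σv with hg
  have hgpos : ∀ v, 0 < g v := fun v => div_pos (stdPdf_pos _) hσv
  have hgint : Integrable g := gauss_integrable hσv
  -- rewrite both integrals
  have hsub : (∫ v, r v * stdPdf ((v - m1) / σv) / σv) = ∫ v, r (v + d) * g (v - m2) := by
    rw [← integral_add_right_eq_self (fun v => r v * stdPdf ((v - m1) / σv) / σv) d]
    congr 1
    ext v
    have e : v + d - m1 = v - m2 := by rw [hd]; ring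
    simp only [hg, e]
    ring
  have hL : (∫ v, r v * stdPdf ((v - m2) / σv) / σv) = ∫ v, r v * g (v - m2) := by
    congr 1
    ext v
    simp only [hg]
    ring
  have hgm2 : Integrable (fun v => g (v - m2)) := hgint.comp_sub_right m2
  have h2 : Integrable (fun v => r v * g (v - m2)) :=
    hgm2.bdd_mul (c := M) hmeas.aestronglyMeasurable (Eventually.of_forall fun v => by simpa [Real.norm_eq_abs] using hM v)
  have h1 : Integrable (fun v => r (v + d) * g (v - m2)) :=
    hgm2.bdd_mul ((hmeas.comp (measurable_add_const d)).aestronglyMeasurable)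
      (c := M) (Eventually.of_forall fun v => by simpa [Real.norm_eq_abs] using hM (v + d))
  have hle : ∀ v, r v * g (v - m2) ≤ r (v + d) * g (v - m2) := fun v =>
    mul_le_mul_of_nonneg_right (hmono (by linarith : v ≤ v + d)) (hgpos _).le
  set h : ℝ → ℝ := fun v => r (v + d) * g (v - m2) - r v * g (v - m2) with hh
  have hint : Integrable h := h1.sub h2
  have hpos : 0 < ∫ v, h v := by
    rw [integral_pos_iff_support_of_nonneg (fun v => sub_nonneg.2 (hle v)) hint]
    rw [pos_iff_ne_zero]
    intro hzero
    have hae : ∀ᵐ v : ℝ ∂volume, h v = 0 := by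
      rw [ae_iff]
      have : {v : ℝ | ¬ h v = 0} = Function.support h := by
        ext v; simp [Function.mem_support]
      rw [this]
      exact hzero
    have hper : ∀ᵐ v : ℝ ∂volume, r (v + d) = r v := by
      filter_upwards [hae] with v hv
      have : (r (v + d) - r v) * g (v - m2) = 0 := by
        simp only [hh] at hv
        linarith [hv]
      rcases mul_eq_zero.mp this with h' | h'
      · linarith [sub_eq_zero.mp h']
      · exact absurd h' (hgpos _).ne'
    exact hnc (mono_ae_periodic r hmono d hd0 hper)
  have hsplit : (∫ v, h v) = (∫ v, r (v + d) * g (v - m2)) - ∫ v, r v * g (v - m2) :=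
    integral_sub h1 h2
  rw [hL, hsub]
  rw [hsplit] at hpos
  linarith

lemma main_mono (θ σε σθ : ℝ) (hσε : 0 < σε) (hσθ : 0 < σθ)
    (r : ℝ → ℝ) (hmeas : Measurable r) (hbdd : ∃ M, ∀ v, |r v| ≤ M)
    (hnc : ¬ ∃ k : ℝ, ∀ᵐ v : ℝ ∂(volume : Measure ℝ), r v = k)
    (hmono : Monotone r) : StrictMono (postReward θ σε σθ r) := by
  intro x2 x1 hx
  have hσv : 0 < σε * σθ / Real.sqrt (σε ^ 2 + σθ ^ 2) := by positivity
  have hτ : 0 < σθ ^ 2 / (σε ^ 2 + σθ ^ 2) := by positivity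
  have hμ : σθ ^ 2 / (σε ^ 2 + σθ ^ 2) * x2 + (1 - σθ ^ 2 / (σε ^ 2 + σθ ^ 2)) * θ <
      σθ ^ 2 / (σε ^ 2 + σθ ^ 2) * x1 + (1 - σθ ^ 2 / (σε ^ 2 + σθ ^ 2)) * θ := by
    have := mul_lt_mul_of_pos_left hx hτ
    linarith
  exact key_lt _ hσv r hmeas hbdd hnc hmono hμ

/-- for a bounded measurable reward that is monotone and not a.e. constant,
    the posterior expected reward is strictly monotone in the private valuation
    (strictly increasing for nondecreasing rewards, strictly decreasing for
    nonincreasing rewards). -/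
theorem stmt_11 (θ σε σθ : ℝ) (hσε : 0 < σε) (hσθ : 0 < σθ)
    (r : ℝ → ℝ) (hmeas : Measurable r) (hbdd : ∃ M, ∀ v, |r v| ≤ M)
    (hnc : ¬ ∃ k : ℝ, ∀ᵐ v : ℝ ∂(volume : Measure ℝ), r v = k) :
    (Monotone r → StrictMono (postReward θ σε σθ r)) ∧
    (Antitone r → StrictAnti (postReward θ σε σθ r)) := by
  constructor
  · exact fun hmono => main_mono θ σε σθ hσε hσθ r hmeas hbdd hnc hmono
  · intro hA
    obtain ⟨M, hM⟩ := hbdd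
    have hm : Monotone (fun v => -r v) := fun a b hab => neg_le_neg (hA hab)
    have hnc' : ¬ ∃ k : ℝ, ∀ᵐ v : ℝ ∂(volume : Measure ℝ), -r v = k := by
      rintro ⟨k, hk⟩
      exact hnc ⟨-k, by filter_upwards [hk] with v hv; linarith⟩
    have hsm := main_mono θ σε σθ hσε hσθ (fun v => -r v) hmeas.neg
      ⟨M, fun v => by simpa [abs_neg] using hM v⟩ hnc' hm
    have he : ∀ x, postReward θ σε σθ (fun v => -r v) x = - postReward θ σε σθ r x := by
      intro x
      unfold postReward
      rw [← integral_neg]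
      congr 1
      ext v
      ring
    intro x2 x1 hx
    have := hsm hx
    rw [he, he] at this
    linarith
end
end
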